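/- Each of the nine matrices J₁₂⁺, J₁₂⁻, J₁₃⁺, J₁₃⁻, J₂₃⁺, J₂₃⁻, J₁, J₂, J₃ satisfies Mᵀ·η₇·M = η₇ (so they lie in the integral orthogonal group of the form η₇ of signature (3,4)), and the subgroup of GL(7,ℤ) that they generate (the generalized Weyl group of SO(3,4)) is finite of order exactly 192 = 2⁵·3!. -/
import Mathlib


open Matrix

/-- The diagonal form `η₇ = diag(1,1,1,−1,−1,−1,−1)` of signature `(3,4)`. -/
def eta7Z : Matrix (Fin 7) (Fin 7) ℤ :=
  !![1, 0, 0, 0, 0, 0, 0;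
     0, 1, 0, 0, 0, 0, 0;
     0, 0, 1, 0, 0, 0, 0;
     0, 0, 0, -1, 0, 0, 0;
     0, 0, 0, 0, -1, 0, 0;
     0, 0, 0, 0, 0, -1, 0;
     0, 0, 0, 0, 0, 0, -1]

/-- The generalized Weyl generator `J₁₂⁺` of `SO(3,4)`. -/
def J₁₂p : Matrix (Fin 7) (Fin 7) ℤ :=
  !![0, -1, 0, 0, 0, 0, 0;
     1, 0, 0, 0, 0, 0, 0;
     0, 0, 1, 0, 0, 0, 0;
     0, 0, 0, 0, 1, 0, 0;
     0, 0, 0, -1, 0, 0, 0;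
     0, 0, 0, 0, 0, 1, 0;
     0, 0, 0, 0, 0, 0, 1]

/-- The generalized Weyl generator `J₁₂⁻` of `SO(3,4)`. -/
def J₁₂m : Matrix (Fin 7) (Fin 7) ℤ :=
  !![0, -1, 0, 0, 0, 0, 0;
     1, 0, 0, 0, 0, 0, 0;
     0, 0, 1, 0, 0, 0, 0;
     0, 0, 0, 0, -1, 0, 0;
     0, 0, 0, 1, 0, 0, 0;
     0, 0, 0, 0, 0, 1, 0;
     0, 0, 0, 0, 0, 0, 1]

/-- The generalized Weyl generator `J₁₃⁺` of `SO(3,4)`. -/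
def J₁₃p : Matrix (Fin 7) (Fin 7) ℤ :=
  !![0, 0, -1, 0, 0, 0, 0;
     0, 1, 0, 0, 0, 0, 0;
     1, 0, 0, 0, 0, 0, 0;
     0, 0, 0, 0, 0, 1, 0;
     0, 0, 0, 0, 1, 0, 0;
     0, 0, 0, -1, 0, 0, 0;
     0, 0, 0, 0, 0, 0, 1]

/-- The generalized Weyl generator `J₁₃⁻` of `SO(3,4)`. -/
def J₁₃m : Matrix (Fin 7) (Fin 7) ℤ :=
  !![0, 0, -1, 0, 0, 0, 0;
     0, 1, 0, 0, 0, 0, 0;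
     1, 0, 0, 0, 0, 0, 0;
     0, 0, 0, 0, 0, -1, 0;
     0, 0, 0, 0, 1, 0, 0;
     0, 0, 0, 1, 0, 0, 0;
     0, 0, 0, 0, 0, 0, 1]

/-- The generalized Weyl generator `J₂₃⁺` of `SO(3,4)`. -/
def J₂₃p : Matrix (Fin 7) (Fin 7) ℤ :=
  !![1, 0, 0, 0, 0, 0, 0;
     0, 0, -1, 0, 0, 0, 0;
     0, 1, 0, 0, 0, 0, 0;
     0, 0, 0, 1, 0, 0, 0;
     0, 0, 0, 0, 0, 1, 0;
     0, 0, 0, 0, -1, 0, 0;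
     0, 0, 0, 0, 0, 0, 1]

/-- The generalized Weyl generator `J₂₃⁻` of `SO(3,4)`. -/
def J₂₃m : Matrix (Fin 7) (Fin 7) ℤ :=
  !![1, 0, 0, 0, 0, 0, 0;
     0, 0, -1, 0, 0, 0, 0;
     0, 1, 0, 0, 0, 0, 0;
     0, 0, 0, 1, 0, 0, 0;
     0, 0, 0, 0, 0, -1, 0;
     0, 0, 0, 0, 1, 0, 0;
     0, 0, 0, 0, 0, 0, 1]

/-- The generalized Weyl generator `J₁ = diag(1,1,1,−1,1,1,−1)`. -/
def J₁ : Matrix (Fin 7) (Fin 7) ℤ :=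
  Matrix.diagonal ![1, 1, 1, -1, 1, 1, -1]

/-- The generalized Weyl generator `J₂ = diag(1,1,1,1,−1,1,−1)`. -/
def J₂ : Matrix (Fin 7) (Fin 7) ℤ :=
  Matrix.diagonal ![1, 1, 1, 1, -1, 1, -1]

/-- The generalized Weyl generator `J₃ = diag(1,1,1,1,1,−1,−1)`. -/
def J₃ : Matrix (Fin 7) (Fin 7) ℤ :=
  Matrix.diagonal ![1, 1, 1, 1, 1, -1, -1]

/-- The set of the nine generalized Weyl generators of `SO(3,4)`. -/
def Jgens : Set (Matrix (Fin 7) (Fin 7) ℤ) :=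
  {J₁₂p, J₁₂m, J₁₃p, J₁₃m, J₂₃p, J₂₃m, J₁, J₂, J₃}



/-! ### Auxiliary: a signed-permutation ("wreath") monoid modelling monomial matrices -/

structure Wm where
  s : Fin 7 → Fin 7
  e : Fin 7 → Bool
deriving DecidableEq

instance : Mul Wm := ⟨fun a b => ⟨fun j => a.s (b.s j), fun j => xor (a.e (b.s j)) (b.e j)⟩⟩
instance : One Wm := ⟨⟨id, fun _ => false⟩⟩

@[simp] lemma Wm.mul_s (a b : Wm) : (a*b).s = fun j => a.s (b.s j) := rfl
@[simp] lemma Wm.mul_e (a b : Wm) : (a*b).e = fun j => xor (a.e (b.s j)) (b.e j) := rfl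
@[simp] lemma Wm.one_s : (1 : Wm).s = id := rfl
@[simp] lemma Wm.one_e : (1 : Wm).e = fun _ => false := rfl

instance : Monoid Wm where
  mul_assoc a b c := by
    cases a; cases b; cases c
    show Wm.mk _ _ = Wm.mk _ _
    simp only [Wm.mul_s, Wm.mul_e, Wm.mk.injEq]
    constructor
    · trivial
    · funext j; simp [Bool.xor_assoc]
  one_mul a := by
    cases a
    show Wm.mk _ _ = Wm.mk _ _
    simp
  mul_one a := by
    cases a
    show Wm.mk _ _ = Wm.mk _ _
    simp

/-- Monomial-matrix realization of `Wm`. -/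
def toM : Wm →* Matrix (Fin 7) (Fin 7) ℤ where
  toFun w := Matrix.of fun i j => if i = w.s j then (if w.e j then -1 else 1) else 0
  map_one' := by
    ext i j
    by_cases h : i = j <;> simp [Matrix.one_apply, h]
  map_mul' a b := by
    ext i j
    rw [Matrix.mul_apply, Finset.sum_eq_single (b.s j)]
    · by_cases h : i = a.s (b.s j) <;>
        cases hb : a.e (b.s j) <;> cases hc : b.e j <;>
        simp [h, hb, hc]
    · intro k _ hk
      simp [hk]
    · simp

lemma toM_injective : Function.Injective toM := by
  intro a b h
  have hent : ∀ i j, toM a i j = toM b i j := fun i j => by rw [h]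
  have hs : a.s = b.s := by
    funext j
    have h1 := hent (b.s j) j
    by_cases hq : b.s j = a.s j
    · exact hq.symm
    · exfalso
      simp only [toM, MonoidHom.coe_mk, OneHom.coe_mk, Matrix.of_apply, if_neg hq,
        if_pos rfl] at h1
      cases hb : b.e j <;> simp [hb] at h1
  have he : a.e = b.e := by
    funext j
    have h1 := hent (b.s j) j
    simp only [toM, MonoidHom.coe_mk, OneHom.coe_mk, Matrix.of_apply, hs, if_pos rfl] at h1
    cases hb : b.e j <;> cases ha : a.e j <;> simp [hb, ha] at h1 <;> rfl
  cases a; cases b; simp_all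

def g1 : Wm := ⟨![1,0,2,4,3,5,6], ![false,true,false,true,false,false,false]⟩
def g2 : Wm := ⟨![1,0,2,4,3,5,6], ![false,true,false,false,true,false,false]⟩
def g3 : Wm := ⟨![2,1,0,5,4,3,6], ![false,false,true,true,false,false,false]⟩
def g4 : Wm := ⟨![2,1,0,5,4,3,6], ![false,false,true,false,false,true,false]⟩
def g5 : Wm := ⟨![0,2,1,3,5,4,6], ![false,false,true,false,true,false,false]⟩
def g6 : Wm := ⟨![0,2,1,3,5,4,6], ![false,false,true,false,false,true,false]⟩
def g7 : Wm := ⟨![0,1,2,3,4,5,6], ![false,false,false,true,false,false,true]⟩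
def g8 : Wm := ⟨![0,1,2,3,4,5,6], ![false,false,false,false,true,false,true]⟩
def g9 : Wm := ⟨![0,1,2,3,4,5,6], ![false,false,false,false,false,true,true]⟩


def gl : List Wm := [g1,g2,g3,g4,g5,g6,g7,g8,g9]

/-- The nine generators inside `Wm`. -/
def Wgens : Set Wm := {g1,g2,g3,g4,g5,g6,g7,g8,g9}

def chain0 : List (Wm × Wm) := [
  (g7, ⟨![2,0,1,5,3,4,6], ![true,true,false,false,false,false,false]⟩),
  (g9, ⟨![2,0,1,5,3,4,6], ![true,true,false,true,false,true,false]⟩),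
  (g8, ⟨![2,0,1,5,3,4,6], ![true,true,false,true,false,true,false]⟩),
  (g7, ⟨![2,0,1,5,3,4,6], ![true,true,false,true,false,true,false]⟩),
  (g7, ⟨![2,0,1,5,3,4,6], ![false,false,false,true,true,false,false]⟩),
  (g9, ⟨![2,0,1,5,3,4,6], ![false,false,false,false,true,true,false]⟩),
  (g8, ⟨![2,0,1,5,3,4,6], ![false,false,false,false,true,true,false]⟩),
  (g7, ⟨![2,0,1,5,3,4,6], ![false,false,false,false,true,true,false]⟩),
  (g9, ⟨![1,2,0,4,5,3,6], ![true,true,false,true,false,true,false]⟩),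
  (g9, ⟨![1,2,0,4,5,3,6], ![true,true,false,false,false,false,false]⟩),
  (g8, ⟨![1,2,0,4,5,3,6], ![true,true,false,false,false,false,false]⟩),
  (g7, ⟨![1,2,0,4,5,3,6], ![true,true,false,false,false,false,false]⟩),
  (g6, ⟨![0,1,2,3,4,5,6], ![false,true,true,true,true,false,false]⟩),
  (g5, ⟨![0,1,2,3,4,5,6], ![false,true,true,true,true,false,false]⟩),
  (g9, ⟨![1,0,2,4,3,5,6], ![true,false,false,true,true,false,true]⟩),
  (g9, ⟨![1,0,2,4,3,5,6], ![true,false,false,false,false,false,true]⟩)]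

def chain1 : List (Wm × Wm) := [
  (g7, ⟨![2,0,1,5,3,4,6], ![true,false,true,false,true,true,false]⟩),
  (g2, ⟨![2,0,1,5,3,4,6], ![true,false,true,false,true,true,false]⟩),
  (g9, ⟨![2,0,1,5,3,4,6], ![true,false,true,true,true,false,false]⟩),
  (g8, ⟨![2,0,1,5,3,4,6], ![true,false,true,true,true,false,false]⟩),
  (g7, ⟨![2,0,1,5,3,4,6], ![true,false,true,true,true,false,false]⟩),
  (g2, ⟨![2,0,1,5,3,4,6], ![true,false,true,true,true,false,false]⟩),
  (g7, ⟨![0,2,1,3,5,4,6], ![false,true,false,false,true,false,false]⟩),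
  (g9, ⟨![0,2,1,3,5,4,6], ![false,true,false,false,false,true,false]⟩),
  (g8, ⟨![0,2,1,3,5,4,6], ![false,true,false,false,false,true,false]⟩),
  (g7, ⟨![0,2,1,3,5,4,6], ![false,true,false,false,false,true,false]⟩),
  (g7, ⟨![0,2,1,3,5,4,6], ![true,false,false,true,false,false,false]⟩),
  (g9, ⟨![0,2,1,3,5,4,6], ![true,false,false,true,true,true,false]⟩),
  (g8, ⟨![0,2,1,3,5,4,6], ![true,false,false,true,true,true,false]⟩),
  (g7, ⟨![0,2,1,3,5,4,6], ![true,false,false,true,true,true,false]⟩),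
  (g8, ⟨![2,1,0,5,4,3,6], ![true,false,false,true,false,false,false]⟩),
  (g9, ⟨![2,1,0,5,4,3,6], ![true,false,false,false,false,true,false]⟩)]

def chain2 : List (Wm × Wm) := [
  (g8, ⟨![2,1,0,5,4,3,6], ![true,false,false,false,false,true,false]⟩),
  (g7, ⟨![2,1,0,5,4,3,6], ![true,false,false,false,false,true,false]⟩),
  (g6, ⟨![1,0,2,4,3,5,6], ![true,true,true,true,true,true,false]⟩),
  (g5, ⟨![1,0,2,4,3,5,6], ![true,true,true,true,true,true,false]⟩),
  (g7, ⟨![1,0,2,4,3,5,6], ![true,true,true,true,false,false,false]⟩),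
  (g9, ⟨![1,0,2,4,3,5,6], ![true,true,true,false,false,true,false]⟩),
  (g8, ⟨![1,0,2,4,3,5,6], ![true,true,true,false,false,true,false]⟩),
  (g7, ⟨![1,0,2,4,3,5,6], ![true,true,true,false,false,true,false]⟩),
  (g6, ⟨![1,0,2,4,3,5,6], ![true,true,true,false,false,true,false]⟩),
  (g5, ⟨![1,0,2,4,3,5,6], ![true,true,true,false,false,true,false]⟩),
  (g9, ⟨![2,1,0,5,4,3,6], ![false,true,false,false,false,true,false]⟩),
  (g9, ⟨![2,1,0,5,4,3,6], ![false,true,false,false,true,false,false]⟩),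
  (g8, ⟨![2,1,0,5,4,3,6], ![false,true,false,false,true,false,false]⟩),
  (g7, ⟨![2,1,0,5,4,3,6], ![false,true,false,false,true,false,false]⟩),
  (g8, ⟨![1,0,2,4,3,5,6], ![false,false,true,true,false,false,false]⟩),
  (g6, ⟨![1,0,2,4,3,5,6], ![false,false,true,true,false,false,false]⟩)]

def chain3 : List (Wm × Wm) := [
  (g5, ⟨![1,0,2,4,3,5,6], ![false,false,true,true,false,false,false]⟩),
  (g9, ⟨![1,0,2,4,3,5,6], ![false,false,true,true,true,true,false]⟩),
  (g8, ⟨![1,0,2,4,3,5,6], ![false,false,true,true,true,true,false]⟩),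
  (g7, ⟨![1,0,2,4,3,5,6], ![false,false,true,true,true,true,false]⟩),
  (g6, ⟨![1,0,2,4,3,5,6], ![false,false,true,true,true,true,false]⟩),
  (g5, ⟨![1,0,2,4,3,5,6], ![false,false,true,true,true,true,false]⟩),
  (g5, ⟨![0,2,1,3,5,4,6], ![true,true,true,false,true,false,false]⟩),
  (g3, ⟨![2,1,0,5,4,3,6], ![true,true,true,true,false,false,false]⟩),
  (g9, ⟨![0,1,2,3,4,5,6], ![true,true,false,true,false,false,true]⟩),
  (g9, ⟨![0,1,2,3,4,5,6], ![true,true,false,false,true,false,true]⟩),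
  (g7, ⟨![0,2,1,3,5,4,6], ![true,true,true,true,true,true,false]⟩),
  (g2, ⟨![0,2,1,3,5,4,6], ![true,true,true,true,true,true,false]⟩),
  (g1, ⟨![0,2,1,3,5,4,6], ![true,true,true,true,true,true,false]⟩),
  (g9, ⟨![0,2,1,3,5,4,6], ![true,true,true,true,false,false,false]⟩),
  (g8, ⟨![0,2,1,3,5,4,6], ![true,true,true,true,false,false,false]⟩),
  (g7, ⟨![0,2,1,3,5,4,6], ![true,true,true,true,false,false,false]⟩)]

def chain4 : List (Wm × Wm) := [
  (g6, ⟨![0,2,1,3,5,4,6], ![true,true,true,true,false,false,false]⟩),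
  (g2, ⟨![0,2,1,3,5,4,6], ![true,true,true,true,false,false,false]⟩),
  (g1, ⟨![0,2,1,3,5,4,6], ![true,true,true,true,false,false,false]⟩),
  (g8, ⟨![2,1,0,5,4,3,6], ![true,true,true,true,true,true,false]⟩),
  (g9, ⟨![2,1,0,5,4,3,6], ![true,true,true,false,true,false,false]⟩),
  (g8, ⟨![2,1,0,5,4,3,6], ![true,true,true,false,true,false,false]⟩),
  (g7, ⟨![2,1,0,5,4,3,6], ![true,true,true,false,true,false,false]⟩),
  (g4, ⟨![2,1,0,5,4,3,6], ![true,true,true,false,true,false,false]⟩),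
  (g9, ⟨![1,0,2,4,3,5,6], ![true,false,false,true,false,false,false]⟩),
  (g6, ⟨![1,0,2,4,3,5,6], ![true,false,false,true,false,false,false]⟩),
  (g5, ⟨![1,0,2,4,3,5,6], ![true,false,false,true,false,false,false]⟩),
  (g9, ⟨![1,0,2,4,3,5,6], ![true,false,false,false,true,false,false]⟩),
  (g8, ⟨![1,0,2,4,3,5,6], ![true,false,false,false,true,false,false]⟩),
  (g7, ⟨![1,0,2,4,3,5,6], ![true,false,false,false,true,false,false]⟩),
  (g6, ⟨![1,0,2,4,3,5,6], ![true,false,false,false,true,false,false]⟩),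
  (g5, ⟨![1,0,2,4,3,5,6], ![true,false,false,false,true,false,false]⟩)]

def chain5 : List (Wm × Wm) := [
  (g9, ⟨![0,1,2,3,4,5,6], ![false,false,false,true,true,false,false]⟩),
  (g7, ⟨![0,1,2,3,4,5,6], ![false,true,true,false,false,false,false]⟩),
  (g9, ⟨![0,1,2,3,4,5,6], ![false,true,true,false,true,true,false]⟩),
  (g8, ⟨![0,1,2,3,4,5,6], ![false,true,true,false,true,true,false]⟩),
  (g7, ⟨![0,1,2,3,4,5,6], ![false,true,true,false,true,true,false]⟩),
  (g6, ⟨![0,1,2,3,4,5,6], ![false,true,true,false,true,true,false]⟩),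
  (g5, ⟨![0,1,2,3,4,5,6], ![false,true,true,false,true,true,false]⟩),
  (g9, ⟨![1,2,0,4,5,3,6], ![false,false,false,false,true,true,false]⟩),
  (g9, ⟨![1,2,0,4,5,3,6], ![false,false,false,true,true,false,false]⟩),
  (g8, ⟨![1,2,0,4,5,3,6], ![false,false,false,true,true,false,false]⟩),
  (g7, ⟨![1,2,0,4,5,3,6], ![false,false,false,true,true,false,false]⟩),
  (g7, ⟨![1,2,0,4,5,3,6], ![true,false,true,false,false,false,false]⟩),
  (g2, ⟨![1,2,0,4,5,3,6], ![true,false,true,false,false,false,false]⟩),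
  (g9, ⟨![1,2,0,4,5,3,6], ![true,false,true,true,true,false,false]⟩),
  (g8, ⟨![1,2,0,4,5,3,6], ![true,false,true,true,true,false,false]⟩),
  (g7, ⟨![1,2,0,4,5,3,6], ![true,false,true,true,true,false,false]⟩)]

def chain6 : List (Wm × Wm) := [
  (g1, ⟨![1,2,0,4,5,3,6], ![true,false,true,true,true,false,false]⟩),
  (g8, ⟨![0,1,2,3,4,5,6], ![true,false,true,false,false,false,false]⟩),
  (g6, ⟨![0,1,2,3,4,5,6], ![true,false,true,false,false,false,false]⟩),
  (g5, ⟨![0,1,2,3,4,5,6], ![true,false,true,false,false,false,false]⟩),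
  (g9, ⟨![0,1,2,3,4,5,6], ![true,false,true,true,false,true,false]⟩),
  (g8, ⟨![0,1,2,3,4,5,6], ![true,false,true,true,false,true,false]⟩),
  (g7, ⟨![0,1,2,3,4,5,6], ![true,false,true,true,false,true,false]⟩),
  (g6, ⟨![0,1,2,3,4,5,6], ![true,false,true,true,false,true,false]⟩),
  (g5, ⟨![0,1,2,3,4,5,6], ![true,false,true,true,false,true,false]⟩),
  (g4, ⟨![0,1,2,3,4,5,6], ![true,false,true,true,false,true,false]⟩),
  (g3, ⟨![0,1,2,3,4,5,6], ![true,false,true,true,false,true,false]⟩),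
  (g6, ⟨![2,0,1,5,3,4,6], ![false,true,true,true,true,false,false]⟩),
  (g5, ⟨![2,0,1,5,3,4,6], ![false,true,true,true,true,false,false]⟩),
  (g4, ⟨![1,2,0,4,5,3,6], ![false,true,true,false,false,false,false]⟩),
  (g3, ⟨![1,2,0,4,5,3,6], ![false,true,true,false,false,false,false]⟩),
  (g9, ⟨![1,0,2,4,3,5,6], ![false,true,false,false,false,false,true]⟩)]

def chain7 : List (Wm × Wm) := [
  (g9, ⟨![1,0,2,4,3,5,6], ![false,true,false,true,true,false,true]⟩),
  (g7, ⟨![2,0,1,5,3,4,6], ![false,true,true,true,false,true,false]⟩),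
  (g2, ⟨![2,0,1,5,3,4,6], ![false,true,true,true,false,true,false]⟩),
  (g1, ⟨![2,0,1,5,3,4,6], ![false,true,true,true,false,true,false]⟩),
  (g9, ⟨![2,0,1,5,3,4,6], ![false,true,true,false,false,false,false]⟩),
  (g8, ⟨![2,0,1,5,3,4,6], ![false,true,true,false,false,false,false]⟩),
  (g7, ⟨![2,0,1,5,3,4,6], ![false,true,true,false,false,false,false]⟩),
  (g6, ⟨![2,0,1,5,3,4,6], ![false,true,true,false,false,false,false]⟩),
  (g5, ⟨![2,0,1,5,3,4,6], ![false,true,true,false,false,false,false]⟩),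
  (g2, ⟨![2,0,1,5,3,4,6], ![false,true,true,false,false,false,false]⟩),
  (g1, ⟨![2,0,1,5,3,4,6], ![false,true,true,false,false,false,false]⟩),
  (g8, ⟨![1,2,0,4,5,3,6], ![false,true,true,true,false,true,false]⟩),
  (g6, ⟨![1,2,0,4,5,3,6], ![false,true,true,true,false,true,false]⟩),
  (g9, ⟨![1,2,0,4,5,3,6], ![false,true,true,true,true,false,false]⟩),
  (g8, ⟨![1,2,0,4,5,3,6], ![false,true,true,true,true,false,false]⟩),
  (g7, ⟨![1,2,0,4,5,3,6], ![false,true,true,true,true,false,false]⟩)]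

def chain8 : List (Wm × Wm) := [
  (g5, ⟨![1,2,0,4,5,3,6], ![false,true,true,true,true,false,false]⟩),
  (g4, ⟨![1,2,0,4,5,3,6], ![false,true,true,true,true,false,false]⟩),
  (g3, ⟨![1,2,0,4,5,3,6], ![false,true,true,true,true,false,false]⟩),
  (g9, ⟨![0,1,2,3,4,5,6], ![true,true,false,false,false,false,false]⟩),
  (g6, ⟨![0,1,2,3,4,5,6], ![true,true,false,false,false,false,false]⟩),
  (g5, ⟨![0,1,2,3,4,5,6], ![true,true,false,false,false,false,false]⟩),
  (g4, ⟨![0,1,2,3,4,5,6], ![true,true,false,false,false,false,false]⟩),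
  (g3, ⟨![0,1,2,3,4,5,6], ![true,true,false,false,false,false,false]⟩),
  (g9, ⟨![0,1,2,3,4,5,6], ![true,true,false,true,true,false,false]⟩),
  (g8, ⟨![0,1,2,3,4,5,6], ![true,true,false,true,true,false,false]⟩),
  (g7, ⟨![0,1,2,3,4,5,6], ![true,true,false,true,true,false,false]⟩),
  (g6, ⟨![0,1,2,3,4,5,6], ![true,true,false,true,true,false,false]⟩),
  (g5, ⟨![0,1,2,3,4,5,6], ![true,true,false,true,true,false,false]⟩),
  (g4, ⟨![0,1,2,3,4,5,6], ![true,true,false,true,true,false,false]⟩),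
  (g3, ⟨![0,1,2,3,4,5,6], ![true,true,false,true,true,false,false]⟩),
  (g2, ⟨![0,1,2,3,4,5,6], ![true,true,false,true,true,false,false]⟩)]

def chain9 : List (Wm × Wm) := [
  (g1, ⟨![0,1,2,3,4,5,6], ![true,true,false,true,true,false,false]⟩),
  (g9, ⟨![0,1,2,3,4,5,6], ![false,false,false,false,true,false,true]⟩),
  (g9, ⟨![0,1,2,3,4,5,6], ![false,false,false,true,false,false,true]⟩),
  (g8, ⟨![0,1,2,3,4,5,6], ![false,false,false,true,false,false,true]⟩),
  (g7, ⟨![0,2,1,3,5,4,6], ![false,false,true,false,false,true,false]⟩),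
  (g2, ⟨![0,2,1,3,5,4,6], ![false,false,true,false,false,true,false]⟩),
  (g1, ⟨![0,2,1,3,5,4,6], ![false,false,true,false,false,true,false]⟩),
  (g9, ⟨![0,2,1,3,5,4,6], ![false,false,true,false,true,false,false]⟩),
  (g8, ⟨![0,2,1,3,5,4,6], ![false,false,true,false,true,false,false]⟩),
  (g7, ⟨![0,2,1,3,5,4,6], ![false,false,true,false,true,false,false]⟩),
  (g6, ⟨![0,2,1,3,5,4,6], ![false,false,true,false,true,false,false]⟩),
  (g5, ⟨![0,2,1,3,5,4,6], ![false,false,true,false,true,false,false]⟩),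
  (g2, ⟨![0,2,1,3,5,4,6], ![false,false,true,false,true,false,false]⟩),
  (g1, ⟨![0,2,1,3,5,4,6], ![false,false,true,false,true,false,false]⟩),
  (g8, ⟨![2,1,0,5,4,3,6], ![false,false,true,false,false,true,false]⟩),
  (g6, ⟨![2,1,0,5,4,3,6], ![false,false,true,false,false,true,false]⟩)]

def chain10 : List (Wm × Wm) := [
  (g5, ⟨![2,1,0,5,4,3,6], ![false,false,true,false,false,true,false]⟩),
  (g9, ⟨![2,1,0,5,4,3,6], ![false,false,true,true,false,false,false]⟩),
  (g8, ⟨![2,1,0,5,4,3,6], ![false,false,true,true,false,false,false]⟩),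
  (g7, ⟨![2,1,0,5,4,3,6], ![false,false,true,true,false,false,false]⟩),
  (g6, ⟨![2,1,0,5,4,3,6], ![false,false,true,true,false,false,false]⟩),
  (g5, ⟨![2,1,0,5,4,3,6], ![false,false,true,true,false,false,false]⟩),
  (g4, ⟨![2,1,0,5,4,3,6], ![false,false,true,true,false,false,false]⟩),
  (g3, ⟨![2,1,0,5,4,3,6], ![false,false,true,true,false,false,false]⟩),
  (g9, ⟨![1,0,2,4,3,5,6], ![false,true,false,false,true,false,false]⟩),
  (g6, ⟨![1,0,2,4,3,5,6], ![false,true,false,false,true,false,false]⟩),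
  (g5, ⟨![1,0,2,4,3,5,6], ![false,true,false,false,true,false,false]⟩),
  (g4, ⟨![1,0,2,4,3,5,6], ![false,true,false,false,true,false,false]⟩),
  (g3, ⟨![1,0,2,4,3,5,6], ![false,true,false,false,true,false,false]⟩),
  (g9, ⟨![1,0,2,4,3,5,6], ![false,true,false,true,false,false,false]⟩),
  (g8, ⟨![1,0,2,4,3,5,6], ![false,true,false,true,false,false,false]⟩),
  (g7, ⟨![1,0,2,4,3,5,6], ![false,true,false,true,false,false,false]⟩)]

def chain11 : List (Wm × Wm) := [
  (g6, ⟨![1,0,2,4,3,5,6], ![false,true,false,true,false,false,false]⟩),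
  (g5, ⟨![1,0,2,4,3,5,6], ![false,true,false,true,false,false,false]⟩),
  (g4, ⟨![1,0,2,4,3,5,6], ![false,true,false,true,false,false,false]⟩),
  (g3, ⟨![1,0,2,4,3,5,6], ![false,true,false,true,false,false,false]⟩),
  (g2, ⟨![1,0,2,4,3,5,6], ![false,true,false,true,false,false,false]⟩),
  (g1, ⟨![1,0,2,4,3,5,6], ![false,true,false,true,false,false,false]⟩),
  (g9, ⟨![0,1,2,3,4,5,6], ![false,false,false,false,false,false,false]⟩),
  (g8, ⟨![0,1,2,3,4,5,6], ![false,false,false,false,false,false,false]⟩),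
  (g7, ⟨![0,1,2,3,4,5,6], ![false,false,false,false,false,false,false]⟩),
  (g6, ⟨![0,1,2,3,4,5,6], ![false,false,false,false,false,false,false]⟩),
  (g5, ⟨![0,1,2,3,4,5,6], ![false,false,false,false,false,false,false]⟩),
  (g4, ⟨![0,1,2,3,4,5,6], ![false,false,false,false,false,false,false]⟩),
  (g3, ⟨![0,1,2,3,4,5,6], ![false,false,false,false,false,false,false]⟩),
  (g2, ⟨![0,1,2,3,4,5,6], ![false,false,false,false,false,false,false]⟩),
  (g1, ⟨![0,1,2,3,4,5,6], ![false,false,false,false,false,false,false]⟩)]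

def chain : List (Wm × Wm) := chain0 ++ chain1 ++ chain2 ++ chain3 ++ chain4 ++ chain5 ++ chain6 ++ chain7 ++ chain8 ++ chain9 ++ chain10 ++ chain11

def TN : List Nat := [100433447, 103929303, 100183743, 104217423, 100183638, 104217318, 100433342, 103929198, 103753518, 99969542, 99719838, 103465398, 51582034, 47548354, 52045848, 51757728, 103930577, 47227007, 100434721, 104218697, 100185017, 51010983, 100524018, 104269578, 100235898, 104019874, 100235807, 104019783, 100523927, 104269487, 99952967, 103448823, 103698527, 99664847, 47745903, 51491463, 100989302, 100701182, 104485158, 104734862, 47457783, 51241759, 103448914, 99953058, 99664938, 103698618, 100701077, 51241654, 47457678, 100989197, 104734757, 104485053, 47745798, 51491358, 52063697, 51814084, 51812719, 52062423, 104270957, 47281998, 51027558, 100525397, 104021253, 100237277, 48318137, 50777854, 46993878, 103450293, 99954437, 99666317, 103699997, 48318228, 104483688, 51243033, 47459057, 104733392, 100987832, 100699712, 51492737, 47747177, 104788278, 100756068, 101005772, 104501628, 104789748, 47798058, 51293914, 103465293, 99719733, 99969437, 103753413, 103466672, 47549628, 99721112, 99970816, 103754792, 51583308, 101005681, 51293823,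 47797967, 100755977, 104789657, 104501537, 47548263, 51581943, 46977303, 50722863, 48263342, 52047318, 48263237, 51759093, 51757819, 52045939, 104218788, 46977394, 51011074, 100185108, 103930668, 100434812, 48013638, 51759198, 50722954, 47227098, 103466763, 51012348, 99721203, 99970907, 103754883, 47228372, 48013533, 52047213, 104500263, 51295293, 47799437, 50724333, 46978773, 104788383, 100754703, 101004407, 51583413, 47549733, 51012453, 47228477, 48012168, 48261872, 52062318, 51812614, 48316758, 104021148, 46993773, 50777749, 100237172, 104270852, 100525292, 48030108, 52063788, 51027453, 47281893, 103699892, 50779128, 51028832, 99666212, 99954332, 103450188, 46995152, 47283272, 48030017, 51813993, 104733483, 51492828, 47747268, 51028923, 46995243, 104483779, 100699803, 100987923, 51243124, 47459148, 50779219, 47283363, 48028743, 48316863, 104500158, 101004302, 100754598, 51295188, 47799332, 50724228, 46978668, 48261963, 48012259, 48028638]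


/-- digit of the numeric encoding -/
def d (w : Wm) (j : Fin 7) : Nat := (w.s j).val + 7 * (w.e j).toNat

/-- numeric encoding of an element of `Wm`, base 14 -/
def enc (w : Wm) : Nat :=
  d w 0 + 14*(d w 1 + 14*(d w 2 + 14*(d w 3 + 14*(d w 4 + 14*(d w 5 + 14*(d w 6))))))

lemma d_eq {a b : Wm} {j : Fin 7} (h : d a j = d b j) : a.s j = b.s j ∧ a.e j = b.e j := by
  have h1 := (a.s j).isLt
  have h2 := (b.s j).isLt
  unfold d at h
  cases ha : a.e j <;> cases hb : b.e j <;> rw [ha, hb] at h <;>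
    simp only [Bool.toNat_false, Bool.toNat_true] at h
  · exact ⟨Fin.ext (by omega), rfl⟩
  · exact absurd h (by omega)
  · exact absurd h (by omega)
  · exact ⟨Fin.ext (by omega), rfl⟩

lemma d_lt (w : Wm) (j : Fin 7) : d w j < 14 := by
  have := (w.s j).isLt
  cases h : w.e j <;> simp [d, h] <;> omega

lemma enc_inj : Function.Injective enc := by
  intro a b h
  unfold enc at h
  have l0 := d_lt a 0; have l1 := d_lt a 1; have l2 := d_lt a 2; have l3 := d_lt a 3
  have l4 := d_lt a 4; have l5 := d_lt a 5; have l6 := d_lt a 6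
  have m0 := d_lt b 0; have m1 := d_lt b 1; have m2 := d_lt b 2; have m3 := d_lt b 3
  have m4 := d_lt b 4; have m5 := d_lt b 5; have m6 := d_lt b 6
  have e0 : d a 0 = d b 0 := by omega
  have e1 : d a 1 = d b 1 := by omega
  have e2 : d a 2 = d b 2 := by omega
  have e3 : d a 3 = d b 3 := by omega
  have e4 : d a 4 = d b 4 := by omega
  have e5 : d a 5 = d b 5 := by omega
  have e6 : d a 6 = d b 6 := by omega
  obtain ⟨s0, x0⟩ := d_eq e0
  obtain ⟨s1, x1⟩ := d_eq e1
  obtain ⟨s2, x2⟩ := d_eq e2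
  obtain ⟨s3, x3⟩ := d_eq e3
  obtain ⟨s4, x4⟩ := d_eq e4
  obtain ⟨s5, x5⟩ := d_eq e5
  obtain ⟨s6, x6⟩ := d_eq e6
  have hs : a.s = b.s := by funext j; fin_cases j <;> assumption
  have he : a.e = b.e := by funext j; fin_cases j <;> assumption
  cases a; cases b; simp_all

lemma mem_of_enc {z : Wm} {L : List Wm} (h : enc z ∈ L.map enc) : z ∈ L := by
  rcases List.mem_map.mp h with ⟨y, hy, he⟩
  exact enc_inj he ▸ hy

/-- products along the chain (the 192 group elements), ending with `1`. -/
def prods : List (Wm × Wm) → List Wm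
  | [] => [1]
  | p :: ps => (p.1 * p.2) :: prods ps

def glN : List Nat := gl.map enc

/-- Boolean check that each chain entry multiplies a generator with a previously
constructed element. -/
def histokb : List (Wm × Wm) → List Nat → Bool
  | [], _ => true
  | p :: ps, ns =>
    match ns with
    | [] => false
    | _ :: ms => (decide (enc p.1 ∈ glN)) && (decide (enc p.2 ∈ ms)) && histokb ps ms

set_option maxHeartbeats 4000000 in
set_option maxRecDepth 40000 in
lemma hT : (prods chain).map enc = TN := by decide

set_option maxHeartbeats 16000000 in
set_option maxRecDepth 40000 in
lemma hcl : ∀ g ∈ gl, ∀ y ∈ prods chain, enc (g * y) ∈ TN := by decide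

set_option maxHeartbeats 4000000 in
set_option maxRecDepth 40000 in
lemma hhist : histokb chain ((prods chain).map enc) = true := by rw [hT]; decide

set_option maxHeartbeats 16000000 in
set_option maxRecDepth 40000 in
lemma hpow : ∀ w ∈ prods chain, enc (w ^ 12) = 48028638 := by decide

set_option maxRecDepth 40000 in
lemma hTNnodup : TN.Nodup := by decide

set_option maxRecDepth 40000 in
lemma hTNlen : TN.length = 192 := by decide

lemma prods_mem (C : Submonoid Wm) (hg : ∀ g ∈ gl, g ∈ C) :
    ∀ H : List (Wm × Wm), histokb H ((prods H).map enc) = true →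
      ∀ w ∈ prods H, w ∈ C := by
  intro H
  induction H with
  | nil =>
    intro _ w hw
    simp only [prods, List.mem_singleton] at hw
    exact hw ▸ one_mem C
  | cons p ps ih =>
    intro hb w hw
    simp only [prods, List.map_cons, histokb, Bool.and_eq_true, decide_eq_true_eq] at hb
    obtain ⟨⟨hg1, hp2⟩, hrest⟩ := hb
    have hpar : p.2 ∈ C := ih hrest p.2 (mem_of_enc hp2)
    have hgen : p.1 ∈ C := hg p.1 (mem_of_enc hg1)
    rcases List.mem_cons.mp hw with rfl | hw'
    · exact mul_mem hgen hpar
    · exact ih hrest w hw'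

lemma gl_of_Wgens {x : Wm} (hx : x ∈ Wgens) : x ∈ gl := by
  simp only [Wgens, Set.mem_insert_iff, Set.mem_singleton_iff] at hx
  rcases hx with rfl|rfl|rfl|rfl|rfl|rfl|rfl|rfl|rfl <;> simp [gl]

lemma closure_sub {w : Wm} (h : w ∈ Submonoid.closure Wgens) : w ∈ prods chain := by
  induction h using Submonoid.closure_induction_left with
  | one => exact mem_of_enc (by rw [hT]; decide)
  | mul_left x hx y hy ih =>
    exact mem_of_enc (by rw [hT]; exact hcl x (gl_of_Wgens hx) y ih)

lemma sub_closure : ∀ w ∈ prods chain, w ∈ Submonoid.closure Wgens := by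
  apply prods_mem _ (fun g hg => Submonoid.subset_closure ?_) chain hhist
  fin_cases hg <;> simp [Wgens]

lemma hset : ((Submonoid.closure Wgens : Submonoid Wm) : Set Wm) = {w | w ∈ prods chain} :=
  Set.ext fun w => ⟨closure_sub, fun h => sub_closure w h⟩

lemma toM_g1 : toM g1 = J₁₂p := by decide
lemma toM_g2 : toM g2 = J₁₂m := by decide
lemma toM_g3 : toM g3 = J₁₃p := by decide
lemma toM_g4 : toM g4 = J₁₃m := by decide
lemma toM_g5 : toM g5 = J₂₃p := by decide
lemma toM_g6 : toM g6 = J₂₃m := by decide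
lemma toM_g7 : toM g7 = J₁ := by decide
lemma toM_g8 : toM g8 = J₂ := by decide
lemma toM_g9 : toM g9 = J₃ := by decide

lemma himg : Jgens = toM '' Wgens := by
  simp only [Jgens, Wgens, Set.image_insert_eq, Set.image_singleton,
    toM_g1, toM_g2, toM_g3, toM_g4, toM_g5, toM_g6, toM_g7, toM_g8, toM_g9]

lemma hmapcl : Submonoid.closure Jgens = Submonoid.map toM (Submonoid.closure Wgens) := by
  rw [MonoidHom.map_mclosure, himg]

lemma cardW : Nat.card (Submonoid.closure Wgens) = 192 := by
  have h1 : Nat.card (Submonoid.closure Wgens) = Nat.card {w | w ∈ prods chain} :=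
    Nat.card_congr (Equiv.setCongr hset)
  rw [h1]
  have h2 : {w | w ∈ prods chain} = ((prods chain).toFinset : Set Wm) := by
    ext w; simp
  rw [h2, Nat.card_coe_set_eq, Set.ncard_coe_finset]
  have hnd : (prods chain).Nodup := by
    have := hTNnodup
    rw [← hT] at this
    exact this.of_map
  rw [List.toFinset_card_of_nodup hnd]
  have : ((prods chain).map enc).length = 192 := by rw [hT]; exact hTNlen
  simpa using this

/-- **The generalized Weyl group of `SO(3,4)` has order `192 = 2⁵·3!`.**
Each of the nine generators lies in the integral orthogonal group of `η₇`, and the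
subgroup of `GL(7,ℤ)` they generate (here the monoid closure, a group since every
element has a two-sided inverse in it) is finite of order exactly `192`. -/
theorem stmt_18 :
    (∀ J ∈ Jgens, Jᵀ * eta7Z * J = eta7Z) ∧
    (∀ x ∈ Submonoid.closure Jgens,
      ∃ y ∈ Submonoid.closure Jgens, x * y = 1 ∧ y * x = 1) ∧
    (Submonoid.closure Jgens : Set (Matrix (Fin 7) (Fin 7) ℤ)).Finite ∧
    Nat.card (Submonoid.closure Jgens) = 192 ∧
    192 = 2 ^ 5 * Nat.factorial 3 := by
  refine ⟨?_, ?_, ?_, ?_, by norm_num [Nat.factorial]⟩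
  · intro J hJ
    simp only [Jgens, Set.mem_insert_iff, Set.mem_singleton_iff] at hJ
    rcases hJ with rfl|rfl|rfl|rfl|rfl|rfl|rfl|rfl|rfl <;> decide
  · intro x hx
    rw [hmapcl] at hx
    rcases Submonoid.mem_map.mp hx with ⟨w, hw, rfl⟩
    have hwT := closure_sub hw
    have h12 : w ^ 12 = 1 := enc_inj ((hpow w hwT).trans (by decide))
    refine ⟨toM (w ^ 11), ?_, ?_, ?_⟩
    · rw [hmapcl]; exact Submonoid.mem_map.mpr ⟨w ^ 11, pow_mem hw 11, rfl⟩
    · rw [← _root_.map_mul, ← pow_succ', h12, _root_.map_one]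
    · rw [← _root_.map_mul, ← pow_succ, h12, _root_.map_one]
  · rw [hmapcl, Submonoid.coe_map]
    apply Set.Finite.image
    exact Set.Finite.subset ((prods chain).finite_toSet) (fun w hw => closure_sub hw)
  · rw [hmapcl]
    have := Nat.card_congr ((Submonoid.equivMapOfInjective
      (Submonoid.closure Wgens) toM toM_injective).toEquiv)
    rw [← this, cardW]
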